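/- arXiv:1911.12858 — 9 statements merged into one kernel-verified Lean document; each statement's English description precedes it below -/
import Mathlib

section
/- Let x ≥ 1 and y ≥ 3 be integers and let s ≥ 1 be the integer with (s-1)s(y/2 - 1) + s - 1 < x ≤ s(s+1)(y/2 - 1) + s. Then the minimum of ⌈(x/m + y/n - 1)(m+n-1)⌉ over all integers m, n with x ≥ m ≥ 1 and y/3 + 1 ≥ n ≥ 2 equals ⌈(x/s + y/2 - 1)(s+1)⌉. -/
set_option maxHeartbeats 2000000 in
private lemma nnDisc (a t u : ℤ) (ha : 0 ≤ a) (ht : 0 ≤ t) (hu : 0 ≤ u) :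
    (0:ℤ) ≤ 636 + 1528*u + 1596*u*u + 768*u*u*u + 128*u*u*u*u + 896*t + 1680*t*u
      + 1040*t*u*u + 192*t*u*u*u + 128*t*t + 192*t*t*u + 48*t*t*u*u + 744*a + 2584*a*u
      + 3424*a*u*u + 1840*a*u*u*u + 320*a*u*u*u*u + 1808*a*t + 3640*a*t*u + 2360*a*t*u*u
      + 448*a*t*u*u*u + 320*a*t*t + 448*a*t*t*u + 112*a*t*t*u*u + 204*a*a + 1528*a*a*u
      + 2576*a*a*u*u + 1512*a*a*u*u*u + 272*a*a*u*u*u*u + 1304*a*a*t + 2808*a*a*t*u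
      + 1896*a*a*t*u*u + 368*a*a*t*u*u*u + 272*a*a*t*t + 368*a*a*t*t*u + 92*a*a*t*t*u*u
      + 408*a*a*a*u + 832*a*a*a*u*u + 520*a*a*a*u*u*u + 96*a*a*a*u*u*u*u + 408*a*a*a*t
      + 928*a*a*a*t*u + 648*a*a*a*t*u*u + 128*a*a*a*t*u*u*u + 96*a*a*a*t*t
      + 128*a*a*a*t*t*u + 32*a*a*a*t*t*u*u + 48*a*a*a*a*u + 100*a*a*a*a*u*u
      + 64*a*a*a*a*u*u*u + 12*a*a*a*a*u*u*u*u + 48*a*a*a*a*t + 112*a*a*a*a*t*u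
      + 80*a*a*a*a*t*u*u + 16*a*a*a*a*t*u*u*u + 12*a*a*a*a*t*t + 16*a*a*a*a*t*t*u
      + 4*a*a*a*a*t*t*u*u := by
  lift a to ℕ using ha
  lift t to ℕ using ht
  lift u to ℕ using hu
  positivity

set_option maxHeartbeats 3000000 in
private lemma caseA2 (s y n m : ℤ) (hs : 2 ≤ s) (hn : 3 ≤ n) (hny : 3*n ≤ y + 3)
    (hm : 1 ≤ m) :
    2*s ≤ 2*s*(y-n)*m*(m+n-1) + s*n*(n-1)*(s*(s-1)*(y-2)+2*s) - 2*s*s*(y-2)*m*n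
      - 2*m*n*(s-1) := by
  have hd := nnDisc (s-2) (y-3*n+3) (n-3) (by linarith) (by linarith) (by linarith)
  have hq : 0 < 2*s*(y-n) := by nlinarith
  have hsq := sq_nonneg (2*(2*s*(y-n))*(m-1) - (54 + 62*(n-3) + 16*(n-3)*(n-3)
    + 8*(y-3*n+3) + 4*(y-3*n+3)*(n-3) + 78*(s-2) + 84*(s-2)*(n-3) + 20*(s-2)*(n-3)*(n-3)
    + 16*(s-2)*(y-3*n+3) + 6*(s-2)*(y-3*n+3)*(n-3) + 24*(s-2)*(s-2) + 26*(s-2)*(s-2)*(n-3)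
    + 6*(s-2)*(s-2)*(n-3)*(n-3) + 6*(s-2)*(s-2)*(y-3*n+3) + 2*(s-2)*(s-2)*(y-3*n+3)*(n-3)))
  have hid : 4*(2*s*(y-n))*((2*s*(y-n)*m*(m+n-1) + s*n*(n-1)*(s*(s-1)*(y-2)+2*s)
      - 2*s*s*(y-2)*m*n - 2*m*n*(s-1)) - 2*s)
      = (2*(2*s*(y-n))*(m-1) - (54 + 62*(n-3) + 16*(n-3)*(n-3)
    + 8*(y-3*n+3) + 4*(y-3*n+3)*(n-3) + 78*(s-2) + 84*(s-2)*(n-3) + 20*(s-2)*(n-3)*(n-3)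
    + 16*(s-2)*(y-3*n+3) + 6*(s-2)*(y-3*n+3)*(n-3) + 24*(s-2)*(s-2) + 26*(s-2)*(s-2)*(n-3)
    + 6*(s-2)*(s-2)*(n-3)*(n-3) + 6*(s-2)*(s-2)*(y-3*n+3) + 2*(s-2)*(s-2)*(y-3*n+3)*(n-3)))^2
      + (636 + 1528*(n-3) + 1596*(n-3)*(n-3) + 768*(n-3)*(n-3)*(n-3)
      + 128*(n-3)*(n-3)*(n-3)*(n-3) + 896*(y-3*n+3) + 1680*(y-3*n+3)*(n-3)
      + 1040*(y-3*n+3)*(n-3)*(n-3) + 192*(y-3*n+3)*(n-3)*(n-3)*(n-3)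
      + 128*(y-3*n+3)*(y-3*n+3) + 192*(y-3*n+3)*(y-3*n+3)*(n-3)
      + 48*(y-3*n+3)*(y-3*n+3)*(n-3)*(n-3) + 744*(s-2) + 2584*(s-2)*(n-3)
      + 3424*(s-2)*(n-3)*(n-3) + 1840*(s-2)*(n-3)*(n-3)*(n-3)
      + 320*(s-2)*(n-3)*(n-3)*(n-3)*(n-3) + 1808*(s-2)*(y-3*n+3)
      + 3640*(s-2)*(y-3*n+3)*(n-3) + 2360*(s-2)*(y-3*n+3)*(n-3)*(n-3)
      + 448*(s-2)*(y-3*n+3)*(n-3)*(n-3)*(n-3) + 320*(s-2)*(y-3*n+3)*(y-3*n+3)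
      + 448*(s-2)*(y-3*n+3)*(y-3*n+3)*(n-3) + 112*(s-2)*(y-3*n+3)*(y-3*n+3)*(n-3)*(n-3)
      + 204*(s-2)*(s-2) + 1528*(s-2)*(s-2)*(n-3) + 2576*(s-2)*(s-2)*(n-3)*(n-3)
      + 1512*(s-2)*(s-2)*(n-3)*(n-3)*(n-3) + 272*(s-2)*(s-2)*(n-3)*(n-3)*(n-3)*(n-3)
      + 1304*(s-2)*(s-2)*(y-3*n+3) + 2808*(s-2)*(s-2)*(y-3*n+3)*(n-3)
      + 1896*(s-2)*(s-2)*(y-3*n+3)*(n-3)*(n-3) + 368*(s-2)*(s-2)*(y-3*n+3)*(n-3)*(n-3)*(n-3)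
      + 272*(s-2)*(s-2)*(y-3*n+3)*(y-3*n+3) + 368*(s-2)*(s-2)*(y-3*n+3)*(y-3*n+3)*(n-3)
      + 92*(s-2)*(s-2)*(y-3*n+3)*(y-3*n+3)*(n-3)*(n-3) + 408*(s-2)*(s-2)*(s-2)*(n-3)
      + 832*(s-2)*(s-2)*(s-2)*(n-3)*(n-3) + 520*(s-2)*(s-2)*(s-2)*(n-3)*(n-3)*(n-3)
      + 96*(s-2)*(s-2)*(s-2)*(n-3)*(n-3)*(n-3)*(n-3) + 408*(s-2)*(s-2)*(s-2)*(y-3*n+3)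
      + 928*(s-2)*(s-2)*(s-2)*(y-3*n+3)*(n-3) + 648*(s-2)*(s-2)*(s-2)*(y-3*n+3)*(n-3)*(n-3)
      + 128*(s-2)*(s-2)*(s-2)*(y-3*n+3)*(n-3)*(n-3)*(n-3) + 96*(s-2)*(s-2)*(s-2)*(y-3*n+3)*(y-3*n+3)
      + 128*(s-2)*(s-2)*(s-2)*(y-3*n+3)*(y-3*n+3)*(n-3) + 32*(s-2)*(s-2)*(s-2)*(y-3*n+3)*(y-3*n+3)*(n-3)*(n-3)
      + 48*(s-2)*(s-2)*(s-2)*(s-2)*(n-3) + 100*(s-2)*(s-2)*(s-2)*(s-2)*(n-3)*(n-3)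
      + 64*(s-2)*(s-2)*(s-2)*(s-2)*(n-3)*(n-3)*(n-3) + 12*(s-2)*(s-2)*(s-2)*(s-2)*(n-3)*(n-3)*(n-3)*(n-3)
      + 48*(s-2)*(s-2)*(s-2)*(s-2)*(y-3*n+3) + 112*(s-2)*(s-2)*(s-2)*(s-2)*(y-3*n+3)*(n-3)
      + 80*(s-2)*(s-2)*(s-2)*(s-2)*(y-3*n+3)*(n-3)*(n-3) + 16*(s-2)*(s-2)*(s-2)*(s-2)*(y-3*n+3)*(n-3)*(n-3)*(n-3)
      + 12*(s-2)*(s-2)*(s-2)*(s-2)*(y-3*n+3)*(y-3*n+3) + 16*(s-2)*(s-2)*(s-2)*(s-2)*(y-3*n+3)*(y-3*n+3)*(n-3)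
      + 4*(s-2)*(s-2)*(s-2)*(s-2)*(y-3*n+3)*(y-3*n+3)*(n-3)*(n-3)) := by
    ring
  nlinarith [hd, hq, hsq, hid]


private lemma consec_nonneg (a : ℤ) : 0 ≤ a * (a - 1) := by
  rcases le_or_gt 1 a with h | h
  · exact mul_nonneg (by linarith) (by linarith)
  · have h2 : 0 ≤ (-a) * (1 - a) := mul_nonneg (by linarith) (by linarith)
    nlinarith [h2]

private lemma nnZ (t u e : ℤ) (ht : 0 ≤ t) (hu : 0 ≤ u) (he : 0 ≤ e) :
    (0:ℤ) ≤ 2 + 3*e + u + 2*u*e + u*e*e + t*e + t*e*e := by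
  lift t to ℕ using ht; lift u to ℕ using hu; lift e to ℕ using he
  positivity

private lemma nnRest (a t u e : ℤ) (ha : 0 ≤ a) (ht : 0 ≤ t) (hu : 0 ≤ u) (he : 0 ≤ e) :
    (0:ℤ) ≤ u*(e-1)^2 + 3*u*e^2 + 7*u + (6*e*e + 8*u*u + 2*u*u*u + 6*t + 4*t*e + 2*t*e*e
      + 8*t*u + 2*t*u*e + 2*t*u*u + 8*a*u + 2*a*u*e + 11*a*u*u + 2*a*u*u*e + 3*a*u*u*u
      + 8*a*t + 2*a*t*e + 11*a*t*u + 2*a*t*u*e + 3*a*t*u*u + 2*a*a*u + 3*a*a*u*u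
      + 1*a*a*u*u*u + 2*a*a*t + 3*a*a*t*u + 1*a*a*t*u*u) := by
  lift a to ℕ using ha; lift t to ℕ using ht; lift u to ℕ using hu; lift e to ℕ using he
  positivity


set_option maxHeartbeats 2000000 in
private lemma key_ineq (x y s ρ m n : ℤ) (hy : 3 ≤ y) (hs : 1 ≤ s) (hm1 : 1 ≤ m)
    (hmx : m ≤ x) (hn2 : 2 ≤ n) (h3n : 3*n ≤ y + 3)
    (hw1 : s*(s-1)*(y-2) + 2*s ≤ 2*x)
    (hρ0 : 0 ≤ ρ) (hρT : ρ ≤ y - 2)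
    (hρ2 : 2*s*ρ ≤ 2*x - s*(s-1)*(y-2) - 2) :
    (x + s*(y-2) + ρ) * (m*n) < (x*n + y*m - m*n) * (m+n-1) := by
  have hT2 : (0:ℤ) ≤ y - 2 := by linarith
  rcases eq_or_lt_of_le hn2 with h2 | h3
  · obtain rfl : n = 2 := h2.symm
    rcases le_or_gt m s with hms | hsm
    · nlinarith [mul_nonneg hT2 (consec_nonneg (s - m)),
        mul_nonneg (by linarith : (0:ℤ) ≤ s - m) hρ0, hρ2]
    · nlinarith [mul_nonneg hT2 (consec_nonneg (m - s)),
        mul_nonneg (by linarith : (0:ℤ) ≤ m - s) (by linarith : (0:ℤ) ≤ (y-2) - ρ), hρ2]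
  · have hn3 : 3 ≤ n := h3
    have ht0 : (0:ℤ) ≤ y - 3*n + 3 := by linarith
    have hu0 : (0:ℤ) ≤ n - 3 := by linarith
    rcases le_or_gt m (s*(n-1)) with hA | hB
    · rcases eq_or_lt_of_le hs with h1 | hs2
      · obtain rfl : s = 1 := h1.symm
        have hρx : ρ ≤ x - 1 := by linarith
        have hf1 : 0 ≤ m*n*((x - 1) - ρ) :=
          mul_nonneg (mul_nonneg (by linarith) (by linarith)) (by linarith)
        have hf2 : 0 ≤ (x - m)*(n*((n-1) - m)) :=
          mul_nonneg (by linarith) (mul_nonneg (by linarith) (by linarith [hA]))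
        have hZ := nnZ (y - 3*n + 3) (n-3) (m-1) ht0 hu0 (by linarith)
        nlinarith [hf1, hf2, hZ]
      · have hW := caseA2 s y n m hs2 hn3 h3n hm1
        have hg1 : 0 ≤ m*n*(2*x - s*(s-1)*(y-2) - 2 - 2*s*ρ) :=
          mul_nonneg (mul_nonneg (by linarith) (by linarith)) (by linarith)
        have hg2 : 0 ≤ (2*x - s*(s-1)*(y-2) - 2*s)*(n*(s*(n-1) - m)) :=
          mul_nonneg (by linarith) (mul_nonneg (by linarith) (by linarith))
        nlinarith [hW, hg1, hg2, hs]
    · have he0 : (0:ℤ) ≤ m - s*(n-1) - 1 := by linarith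
      have hf1 : 0 ≤ (n*(n-1))*(2*x - s*(s-1)*(y-2) - 2 - 2*s*ρ) :=
        mul_nonneg (mul_nonneg (by linarith) (by linarith)) (by linarith)
      have hf2 : 0 ≤ 2*n*((y-2) - ρ)*(m - s*(n-1)) :=
        mul_nonneg (mul_nonneg (mul_nonneg (by norm_num) (by linarith)) (by linarith))
          (by linarith)
      have hR := nnRest (s-1) (y-3*n+3) (n-3) (m - s*(n-1) - 1) (by linarith) ht0 hu0 he0
      nlinarith [hf1, hf2, hR]



set_option maxHeartbeats 1000000 in
theorem stmt_2 (x y s : ℤ) (hx : 1 ≤ x) (hy : 3 ≤ y) (hs : 1 ≤ s)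
    (hs1 : ((s : ℚ) - 1) * s * ((y : ℚ) / 2 - 1) + s - 1 < x)
    (hs2 : (x : ℚ) ≤ s * (s + 1) * ((y : ℚ) / 2 - 1) + s) :
    IsLeast {z : ℤ | ∃ m n : ℤ, 1 ≤ m ∧ m ≤ x ∧ 2 ≤ n ∧ (n : ℚ) ≤ (y : ℚ) / 3 + 1 ∧
        z = ⌈((x : ℚ) / m + (y : ℚ) / n - 1) * (m + n - 1)⌉}
      ⌈((x : ℚ) / s + (y : ℚ) / 2 - 1) * (s + 1)⌉ := by
  have hs0 : (0:ℚ) < (s:ℚ) := by exact_mod_cast lt_of_lt_of_le zero_lt_one hs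
  have hsne : (s:ℚ) ≠ 0 := ne_of_gt hs0
  obtain ⟨j, hj⟩ := (Int.even_mul_succ_self (s - 1))
  have hk : s*(s-1)*(y-2) = 2*(j*(y-2)) := by
    have h1 : s*(s-1) = j + j := by rw [show s*(s-1) = (s-1)*((s-1)+1) by ring, hj]
    nlinarith [h1]
  have hInt1 : s*(s-1)*(y-2) + 2*s - 2 < 2*x := by
    have hq : ((s*(s-1)*(y-2) + 2*s - 2 : ℤ) : ℚ) < ((2*x : ℤ) : ℚ) := by
      push_cast; nlinarith [hs1]
    exact_mod_cast hq
  have hw1 : s*(s-1)*(y-2) + 2*s ≤ 2*x := by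
    have h1 : j*(y-2) + s - 1 < x := by linarith [hk, hInt1]
    have h2 : j*(y-2) + s ≤ x := by linarith [Int.lt_iff_add_one_le.mp h1]
    linarith [hk]
  have hw2 : 2*x ≤ s*(s+1)*(y-2) + 2*s := by
    have hq : ((2*x : ℤ) : ℚ) ≤ ((s*(s+1)*(y-2) + 2*s : ℤ) : ℚ) := by
      push_cast; nlinarith [hs2]
    exact_mod_cast hq
  set c : ℤ := ⌈((x : ℚ) / s + (y : ℚ) / 2 - 1) * ((s:ℚ) + 1)⌉ with hcdef
  have hcu : ((x : ℚ) / s + (y : ℚ) / 2 - 1) * ((s:ℚ) + 1) ≤ (c:ℚ) := Int.le_ceil _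
  have hcl : (c:ℚ) < ((x : ℚ) / s + (y : ℚ) / 2 - 1) * ((s:ℚ) + 1) + 1 :=
    Int.ceil_lt_add_one _
  have hidq : 2*(s:ℚ)*(((x:ℚ)/s + (y:ℚ)/2 - 1)*((s:ℚ)+1))
      = (2*(x:ℚ) + s*((y:ℚ)-2))*((s:ℚ)+1) := by
    field_simp; ring
  have hc1 : (2*x + s*(y-2))*(s+1) ≤ 2*s*c := by
    have hq : (((2*x + s*(y-2))*(s+1) : ℤ) : ℚ) ≤ ((2*s*c : ℤ) : ℚ) := by
      push_cast
      nlinarith [mul_le_mul_of_nonneg_left hcu (by positivity : (0:ℚ) ≤ 2*(s:ℚ)), hidq]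
    exact_mod_cast hq
  have hc2 : 2*s*c < (2*x + s*(y-2))*(s+1) + 2*s := by
    have hq : ((2*s*c : ℤ) : ℚ) < (((2*x + s*(y-2))*(s+1) + 2*s : ℤ) : ℚ) := by
      push_cast
      nlinarith [mul_lt_mul_of_pos_left hcl (by positivity : (0:ℚ) < 2*(s:ℚ)), hidq]
    exact_mod_cast hq
  set ρ : ℤ := c - x - s*(y-2) - 1 with hρdef
  have hρ1 : 2*x - s*(s-1)*(y-2) - 2*s ≤ 2*s*ρ := by
    have he : 2*s*ρ = 2*s*c - 2*s*x - 2*s*(s*(y-2)) - 2*s := by rw [hρdef]; ring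
    nlinarith [hc1, he]
  have hρ2 : 2*s*ρ ≤ 2*x - s*(s-1)*(y-2) - 2 := by
    have he : 2*s*ρ = 2*s*c - 2*s*x - 2*s*(s*(y-2)) - 2*s := by rw [hρdef]; ring
    have h0 : 2*s*ρ < 2*x - s*(s-1)*(y-2) := by nlinarith [hc2, he]
    have h1 : 2*(s*ρ) < 2*(x - j*(y-2)) := by linarith [hk]
    have h2 : s*ρ < x - j*(y-2) := by linarith
    have h3 : s*ρ ≤ x - j*(y-2) - 1 := by linarith [Int.lt_iff_add_one_le.mp h2]
    linarith [hk]
  have hρ0 : 0 ≤ ρ := by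
    have h0 : 2*s*0 ≤ 2*s*ρ := by rw [mul_zero]; linarith
    exact le_of_mul_le_mul_left h0 (by linarith)
  have hρT : ρ ≤ y - 2 := by
    have h0 : 2*s*ρ < 2*s*(y-1) := by nlinarith [hρ2, hw2]
    have h1 : ρ < y - 1 := lt_of_mul_lt_mul_left h0 (by linarith)
    linarith
  constructor
  · refine ⟨s, 2, hs, ?_, le_refl 2, ?_, ?_⟩
    · have h1 : 0 ≤ s*(s-1)*(y-2) :=
        mul_nonneg (mul_nonneg (by linarith) (by linarith)) (by linarith)
      linarith
    · have h3 : (3:ℚ) ≤ (y:ℚ) := by exact_mod_cast hy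
      push_cast
      linarith
    · rw [hcdef]
      congr 1
      push_cast
      ring
  · rintro z ⟨m, n, hm1, hmx, hn2, hn3, rfl⟩
    have hm0 : (0:ℚ) < (m:ℚ) := by exact_mod_cast lt_of_lt_of_le zero_lt_one hm1
    have hn0 : (0:ℚ) < (n:ℚ) := by
      have h : (0:ℤ) < n := by linarith
      exact_mod_cast h
    have h3n : 3*n ≤ y + 3 := by
      have hq : ((3*n : ℤ) : ℚ) ≤ ((y + 3 : ℤ) : ℚ) := by push_cast; linarith [hn3]
      exact_mod_cast hq
    have KEY' : (c - 1) * (m*n) < (x*n + y*m - m*n) * (m+n-1) := by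
      have e1 : c - 1 = x + s*(y-2) + ρ := by rw [hρdef]; ring
      rw [e1]
      exact key_ineq x y s ρ m n hy hs hm1 hmx hn2 h3n hw1 hρ0 hρT hρ2
    have KEYQ : (c:ℚ) - 1 < ((x:ℚ)/m + (y:ℚ)/n - 1) * ((m:ℚ) + (n:ℚ) - 1) := by
      have hrw : ((x:ℚ)/m + (y:ℚ)/n - 1) * ((m:ℚ) + (n:ℚ) - 1)
          = (((x:ℚ)*n + (y:ℚ)*m - (m:ℚ)*n) * ((m:ℚ)+(n:ℚ)-1)) / ((m:ℚ)*(n:ℚ)) := by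
        field_simp
        try ring
      rw [hrw, lt_div_iff₀ (by positivity)]
      have hq : (((c - 1) * (m*n) : ℤ) : ℚ) < (((x*n + y*m - m*n) * (m+n-1) : ℤ) : ℚ) := by
        exact_mod_cast KEY'
      push_cast at hq
      linarith [hq]
    have hfin : c - 1 < ⌈((x:ℚ)/m + (y:ℚ)/n - 1) * ((m:ℚ) + (n:ℚ) - 1)⌉ := by
      rw [Int.lt_ceil]
      push_cast
      exact KEYQ
    omega
end

section
/- Let G be an abelian group and let A, B ⊆ G be finite nonempty subsets forming a type (III) elementary pair with a₀ + b₀ the unique expression element in A + B, where a₀ ∈ A and b₀ ∈ B. Then (A \ {a₀}) + (B \ {b₀}) = (A + B) \ {a₀ + b₀}. -/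
open Pointwise

theorem stmt_5 {G : Type*} [AddCommGroup G] [DecidableEq G]
    (K : AddSubgroup G) (A B : Finset G) (hA : A.Nonempty) (hB : B.Nonempty)
    (hAK : (A : Set G) ⊆ K) (hBK : (B : Set G) ⊆ K)
    (hcard : A.card + B.card = Nat.card K + 1)
    (a₀ b₀ : G) (ha₀ : a₀ ∈ A) (hb₀ : b₀ ∈ B)
    (huniq : ∃! p : G × G, p.1 ∈ A ∧ p.2 ∈ B ∧ p.1 + p.2 = a₀ + b₀)
    (honly : ∀ z ∈ A + B, (∃! p : G × G, p.1 ∈ A ∧ p.2 ∈ B ∧ p.1 + p.2 = z) → z = a₀ + b₀) :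
    (A.erase a₀) + (B.erase b₀) = (A + B).erase (a₀ + b₀) := by
  classical
  set u := a₀ + b₀ with hu
  -- uniqueness of representation of u
  have hrep : ∀ a b, a ∈ A → b ∈ B → a + b = u → a = a₀ ∧ b = b₀ := by
    intro a b ha hb hab
    obtain ⟨p, -, hup⟩ := huniq
    have h1 := hup (a, b) ⟨ha, hb, hab⟩
    have h2 := hup (a₀, b₀) ⟨ha₀, hb₀, rfl⟩
    have h3 := h1.trans h2.symm
    exact ⟨congrArg Prod.fst h3, congrArg Prod.snd h3⟩
  have hApos : 0 < A.card := Finset.card_pos.mpr hA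
  have hBpos : 0 < B.card := Finset.card_pos.mpr hB
  haveI hfinK : Finite K := Nat.finite_of_card_ne_zero (by omega)
  have hfinS : (K : Set G).Finite := Set.toFinite _
  set KF := hfinS.toFinset with hKF
  have hmemKF : ∀ x, x ∈ KF ↔ x ∈ K := fun x => hfinS.mem_toFinset
  have hkcard : KF.card = Nat.card K := by
    have h1 : (K : Set G).ncard = hfinS.toFinset.card :=
      Set.ncard_eq_toFinset_card _ hfinS
    rw [hKF, ← h1, ← Nat.card_coe_set_eq]
    rfl
  have hASub : A ⊆ KF := fun a ha => (hmemKF a).mpr (hAK ha)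
  have hBSub : B ⊆ KF := fun b hb => (hmemKF b).mpr (hBK hb)
  have huK : u ∈ K := add_mem (hAK ha₀) (hBK hb₀)
  have hck : A.card + B.card = KF.card + 1 := by rw [hkcard]; exact hcard
  -- "difference images"
  set Bz : G → Finset G := fun z => B.image (fun b => z - b) with hBzdef
  set Az : G → Finset G := fun z => A.image (fun a => z - a) with hAzdef
  have hmemBz : ∀ z x, x ∈ Bz z ↔ z - x ∈ B := by
    intro z x
    constructor
    · rintro hx
      rw [hBzdef] at hx
      simp only [Finset.mem_image] at hx
      obtain ⟨b, hb, rfl⟩ := hx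
      simpa using hb
    · intro hx
      rw [hBzdef]
      simp only [Finset.mem_image]
      exact ⟨z - x, hx, by abel⟩
  have hmemAz : ∀ z x, x ∈ Az z ↔ z - x ∈ A := by
    intro z x
    constructor
    · rintro hx
      rw [hAzdef] at hx
      simp only [Finset.mem_image] at hx
      obtain ⟨a, ha, rfl⟩ := hx
      simpa using ha
    · intro hx
      rw [hAzdef]
      simp only [Finset.mem_image]
      exact ⟨z - x, hx, by abel⟩
  have hcardBz : ∀ z, (Bz z).card = B.card := fun z =>
    Finset.card_image_of_injective _ sub_right_injective
  have hcardAz : ∀ z, (Az z).card = A.card := fun z =>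
    Finset.card_image_of_injective _ sub_right_injective
  have hBzSub : ∀ z, z ∈ K → Bz z ⊆ KF := by
    intro z hz x hx
    rw [hmemBz] at hx
    have : x = z - (z - x) := by abel
    rw [hmemKF, this]
    exact sub_mem hz (hBK hx)
  have hAzSub : ∀ z, z ∈ K → Az z ⊆ KF := by
    intro z hz x hx
    rw [hmemAz] at hx
    have : x = z - (z - x) := by abel
    rw [hmemKF, this]
    exact sub_mem hz (hAK hx)
  -- unique representation of u, set version
  have hL1 : A ∩ Bz u = {a₀} := by
    ext x
    rw [Finset.mem_inter, hmemBz, Finset.mem_singleton]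
    constructor
    · rintro ⟨hx1, hx2⟩
      exact (hrep x (u - x) hx1 hx2 (by abel)).1
    · intro hx
      rw [hx]
      refine ⟨ha₀, ?_⟩
      have he : u - a₀ = b₀ := by rw [hu]; abel
      rwa [he]
  have hL2 : A ∪ Bz u = KF := by
    apply Finset.eq_of_subset_of_card_le (Finset.union_subset hASub (hBzSub u huK))
    have h1 := Finset.card_union_add_card_inter A (Bz u)
    rw [hL1, Finset.card_singleton, hcardBz] at h1
    omega
  have hL1' : B ∩ Az u = {b₀} := by
    ext x
    rw [Finset.mem_inter, hmemAz, Finset.mem_singleton]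
    constructor
    · rintro ⟨hx1, hx2⟩
      exact (hrep (u - x) x hx2 hx1 (by abel)).2
    · intro hx
      rw [hx]
      refine ⟨hb₀, ?_⟩
      have he : u - b₀ = a₀ := by rw [hu]; abel
      rwa [he]
  have hL2' : B ∪ Az u = KF := by
    apply Finset.eq_of_subset_of_card_le (Finset.union_subset hBSub (hAzSub u huK))
    have h1 := Finset.card_union_add_card_inter B (Az u)
    rw [hL1', Finset.card_singleton, hcardAz] at h1
    omega
  -- main set equality
  apply Finset.Subset.antisymm
  · intro x hx
    rw [Finset.mem_add] at hx
    obtain ⟨a, ha, b, hb, rfl⟩ := hx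
    obtain ⟨hane, haA⟩ := Finset.mem_erase.mp ha
    obtain ⟨hbne, hbB⟩ := Finset.mem_erase.mp hb
    rw [Finset.mem_erase]
    refine ⟨fun h => hane (hrep a b haA hbB h).1, Finset.add_mem_add haA hbB⟩
  · intro z hz
    obtain ⟨hzu, hzAB⟩ := Finset.mem_erase.mp hz
    by_contra hno
    -- every representation of z goes through a₀ or b₀
    have hnogood : ∀ a b, a ∈ A → b ∈ B → a + b = z → a = a₀ ∨ b = b₀ := by
      intro a b ha hb hab
      by_contra hc
      push_neg at hc
      exact hno (hab ▸ Finset.add_mem_add (Finset.mem_erase.mpr ⟨hc.1, ha⟩)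
        (Finset.mem_erase.mpr ⟨hc.2, hb⟩))
    obtain ⟨a1, ha1, b1, hb1, hab1⟩ := Finset.mem_add.mp hzAB
    have hzK : z ∈ K := hab1 ▸ add_mem (hAK ha1) (hBK hb1)
    -- there are two distinct representations of z
    have h2reps : ∃ p : G × G, (p.1 ∈ A ∧ p.2 ∈ B ∧ p.1 + p.2 = z) ∧ p ≠ (a1, b1) := by
      by_contra h
      push_neg at h
      exact hzu (honly z hzAB ⟨(a1, b1), ⟨ha1, hb1, hab1⟩, fun p hp => h p hp⟩)
    obtain ⟨⟨a2, b2⟩, ⟨ha2, hb2, hab2⟩, hpne⟩ := h2reps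
    have hzab : z - a₀ ≠ b₀ := fun h => hzu (by rw [hu, ← h]; abel)
    have hzba : z - b₀ ≠ a₀ := fun h => hzu (by rw [hu, ← h]; abel)
    have hone : ∀ a b, a ∈ A → b ∈ B → a + b = z →
        (a = a₀ ∧ b = z - a₀) ∨ (b = b₀ ∧ a = z - b₀) := by
      intro a b ha hb hab
      rcases hnogood a b ha hb hab with h | h
      · exact Or.inl ⟨h, by rw [← h, ← hab]; abel⟩
      · exact Or.inr ⟨h, by rw [← h, ← hab]; abel⟩
    -- z - a₀ ∈ B and z - b₀ ∈ A
    have hkey : z - a₀ ∈ B ∧ z - b₀ ∈ A := by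
      rcases hone a1 b1 ha1 hb1 hab1 with ⟨he1, he2⟩ | ⟨he1, he2⟩ <;>
        rcases hone a2 b2 ha2 hb2 hab2 with ⟨hf1, hf2⟩ | ⟨hf1, hf2⟩
      · exact absurd (Prod.ext (hf1.trans he1.symm) (hf2.trans he2.symm)) hpne
      · exact ⟨he2 ▸ hb1, hf2 ▸ ha2⟩
      · exact ⟨hf2 ▸ hb2, he2 ▸ ha1⟩
      · exact absurd (Prod.ext (hf2.trans he2.symm) (hf1.trans he1.symm)) hpne
    obtain ⟨haz, hbz⟩ := hkey
    -- representations of z: exactly {a₀, z - b₀}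
    have hIz : A ∩ Bz z = {a₀, z - b₀} := by
      ext x
      rw [Finset.mem_inter, hmemBz, Finset.mem_insert, Finset.mem_singleton]
      constructor
      · rintro ⟨hx1, hx2⟩
        rcases hnogood x (z - x) hx1 hx2 (by abel) with h | h
        · exact Or.inl h
        · exact Or.inr (by rw [← h]; abel)
      · rintro (hx | hx) <;> rw [hx]
        · exact ⟨ha₀, haz⟩
        · refine ⟨hbz, ?_⟩
          have he : z - (z - b₀) = b₀ := by abel
          rwa [he]
    have hIzcard : (A ∩ Bz z).card = 2 := by
      rw [hIz]
      rw [Finset.card_insert_of_notMem (by simpa using fun h => hzba h.symm)]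
      simp
    -- the complement of A ∪ (z - B) in K is a single element w
    have hCcard : (KF \ (A ∪ Bz z)).card = 1 := by
      have hsub : A ∪ Bz z ⊆ KF := Finset.union_subset hASub (hBzSub z hzK)
      have h1 := Finset.card_union_add_card_inter A (Bz z)
      rw [hIzcard, hcardBz] at h1
      have h2 := Finset.card_sdiff_of_subset hsub
      have h3 : (A ∪ Bz z).card ≤ KF.card := Finset.card_le_card hsub
      omega
    obtain ⟨w, hw⟩ := Finset.card_eq_one.mp hCcard
    have hwmem : w ∈ KF \ (A ∪ Bz z) := hw ▸ Finset.mem_singleton_self w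
    have hwK : w ∈ KF := (Finset.mem_sdiff.mp hwmem).1
    have hwAB : w ∉ A ∪ Bz z := (Finset.mem_sdiff.mp hwmem).2
    have hwA : w ∉ A := fun h => hwAB (Finset.mem_union_left _ h)
    have hwB : z - w ∉ B := fun h => hwAB (Finset.mem_union_right _ ((hmemBz z w).mpr h))
    have hF1 : ∀ x, x ∈ KF → x ∉ A → x ≠ w → z - x ∈ B ∧ z - x ≠ b₀ := by
      intro x hx hxA hxw
      have hxC : x ∉ KF \ (A ∪ Bz z) := by rw [hw, Finset.mem_singleton]; exact hxw
      have hxU : x ∈ A ∪ Bz z := by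
        by_contra h
        exact hxC (Finset.mem_sdiff.mpr ⟨hx, h⟩)
      rcases Finset.mem_union.mp hxU with h | h
      · exact absurd h hxA
      · refine ⟨(hmemBz z x).mp h, fun he => hxA ?_⟩
        have : x = z - b₀ := by rw [← he]; abel
        rwa [this]
    -- u - w ∈ B
    have hwu : u - w ∈ B := by
      have : w ∈ A ∪ Bz u := hL2 ▸ hwK
      rcases Finset.mem_union.mp this with h | h
      · exact absurd h hwA
      · exact (hmemBz u w).mp h
    -- u - z + w ∈ A
    have hwd : u - z + w ∈ A := by
      have hx : z - w ∈ KF := (hmemKF _).mpr (sub_mem hzK ((hmemKF w).mp hwK))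
      have : z - w ∈ B ∪ Az u := hL2' ▸ hx
      rcases Finset.mem_union.mp this with h | h
      · exact absurd h hwB
      · have := (hmemAz u (z - w)).mp h
        have he : u - (z - w) = u - z + w := by abel
        rwa [he] at this
    -- key lemma: shifting B elements down by u - z
    have hshift : ∀ b, b ∈ B → b ≠ u - w → (b - (u - z) ∈ B ∧ b - (u - z) ≠ b₀) := by
      intro b hb hbw
      by_cases hbb : b = b₀
      · rw [hbb]
        have he : b₀ - (u - z) = z - a₀ := by rw [hu]; abel
        rw [he]
        exact ⟨haz, hzab⟩
      · have hx : u - b ∈ KF := (hmemKF _).mpr (sub_mem huK (hBK hb))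
        have hxA : u - b ∉ A := by
          intro h
          have : u - b ∈ A ∩ Bz u := Finset.mem_inter.mpr ⟨h, (hmemBz u (u - b)).mpr
            (by have : u - (u - b) = b := by abel
                rwa [this])⟩
          rw [hL1, Finset.mem_singleton] at this
          apply hbb
          have h3 : b = u - a₀ := by rw [← this]; abel
          rw [h3, hu]; abel
        have hxw : u - b ≠ w := by
          intro h
          apply hbw
          rw [← h]; abel
        have := hF1 (u - b) hx hxA hxw
        have he : z - (u - b) = b - (u - z) := by abel
        rwa [he] at this
    -- u + (u - z) is a unique expression element
    have hy : u + (u - z) ∈ A + B := Finset.mem_add.mpr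
      ⟨u - z + w, hwd, u - w, hwu, by abel⟩
    have hyuniq : ∃! p : G × G, p.1 ∈ A ∧ p.2 ∈ B ∧ p.1 + p.2 = u + (u - z) := by
      refine ⟨(u - z + w, u - w), ⟨hwd, hwu, by show (u - z + w) + (u - w) = u + (u - z); abel⟩, ?_⟩
      rintro ⟨a, b⟩ ⟨ha, hb, hab⟩
      simp only at hab ⊢
      by_cases hbw : b = u - w
      · have h2 : a + (u - w) = u + (u - z) := by rw [← hbw]; exact hab
        have h3 : a = u + (u - z) - (u - w) := by rw [← h2]; abel
        have h4 : a = u - z + w := by rw [h3]; abel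
        exact Prod.ext h4 hbw
      · exfalso
        obtain ⟨hb1, hb2⟩ := hshift b hb hbw
        have hru : a + (b - (u - z)) = u := by
          have h1 : a + (b - (u - z)) = a + b - (u - z) := by abel
          rw [h1, hab]; abel
        exact hb2 (hrep a (b - (u - z)) ha hb1 hru).2
    have heq := honly (u + (u - z)) hy hyuniq
    have h2 : u - z = 0 := by
      have h3 : u + (u - z) = u + 0 := by rw [heq, add_zero]
      exact add_left_cancel h3
    exact hzu (sub_eq_zero.mp h2).symm
end

section
/- Let A, B ⊆ ℤ be finite nonempty subsets, let N ≥ 1 be an integer, and let φ : ℤ → ℤ/NℤZ be the natural homomorphism. Suppose φ(A) and φ(B) are arithmetic progressions modulo N with common difference d ∈ [1, N-1] such that |φ(A)| + |φ(B)| - 1 ≤ ord(φ(d)). Then A + B is Freiman isomorphic to a sumset ⋃_{i=0}^{m-1}(X_i × {i}) + ⋃_{j=0}^{n-1}(Y_j × {j}) ⊆ ℤ², where A = A_0 ∪ ... ∪ A_{m-1} and B = B_0 ∪ ... ∪ B_{n-1} are the partitions of A and B into residue classes modulo N indexed so that consecutive classes differ by φ(d), and X_i = (1/N)·(A_i - α_i),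 Y_j = (1/N)·(B_j - β_j) with α_i = α_0 + id, β_j = β_0 + jd for fixed α_0 ∈ A_0, β_0 ∈ B_0. -/
lemma aux_nsmul_inj {N : ℕ} [NeZero N] (x : ZMod N) {k k' : ℕ}
    (hk : k < addOrderOf x) (hk' : k' < addOrderOf x) (h : k • x = k' • x) : k = k' := by
  wlog hle : k ≤ k' generalizing k k'
  · exact (this hk' hk h.symm (le_of_not_ge hle)).symm
  have h0 : (k' - k) • x = 0 := by
    rw [sub_nsmul x hle, h]
    abel
  have hdvd : addOrderOf x ∣ k' - k := addOrderOf_dvd_iff_nsmul_eq_zero.mpr h0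
  have h1 : k' - k = 0 := Nat.eq_zero_of_dvd_of_lt hdvd (by omega)
  omega

theorem stmt_6 (A B : Finset ℤ) (hA : A.Nonempty) (hB : B.Nonempty)
    (N : ℕ) [NeZero N] (hN : 1 ≤ N) (d : ℤ) (hd1 : 1 ≤ d) (hd2 : d ≤ (N : ℤ) - 1)
    (m n : ℕ) (hm : 1 ≤ m) (hn : 1 ≤ n) (α₀ β₀ : ℤ) (hα₀ : α₀ ∈ A) (hβ₀ : β₀ ∈ B)
    (hAim : A.image (fun a : ℤ => (a : ZMod N))
      = (Finset.range m).image (fun i : ℕ => ((α₀ + (i : ℤ) * d : ℤ) : ZMod N)))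
    (hBim : B.image (fun b : ℤ => (b : ZMod N))
      = (Finset.range n).image (fun j : ℕ => ((β₀ + (j : ℤ) * d : ℤ) : ZMod N)))
    (hAcard : (A.image (fun a : ℤ => (a : ZMod N))).card = m)
    (hBcard : (B.image (fun b : ℤ => (b : ZMod N))).card = n)
    (hord : m + n - 1 ≤ addOrderOf ((d : ℤ) : ZMod N)) :
    ∃ ψA ψB : ℤ → ℤ × ℤ,
      (∀ a ∈ A, ∀ i : ℕ, i < m → (a : ZMod N) = ((α₀ + (i : ℤ) * d : ℤ) : ZMod N) →
        ψA a = ((a - (α₀ + (i : ℤ) * d)) / (N : ℤ), (i : ℤ))) ∧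
      (∀ b ∈ B, ∀ j : ℕ, j < n → (b : ZMod N) = ((β₀ + (j : ℤ) * d : ℤ) : ZMod N) →
        ψB b = ((b - (β₀ + (j : ℤ) * d)) / (N : ℤ), (j : ℤ))) ∧
      (∀ a ∈ A, ∀ a' ∈ A, ∀ b ∈ B, ∀ b' ∈ B,
        (ψA a + ψB b = ψA a' + ψB b' ↔ a + b = a' + b')) := by
  classical
  set x : ZMod N := ((d : ℤ) : ZMod N) with hx
  -- key: multiplication by casts
  have hkey : ∀ k k' : ℕ, k < m + n - 1 → k' < m + n - 1 →
      (((k : ℤ) * d : ℤ) : ZMod N) = (((k' : ℤ) * d : ℤ) : ZMod N) → k = k' := by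
    intro k k' hk hk' h
    apply aux_nsmul_inj x (lt_of_lt_of_le hk hord) (lt_of_lt_of_le hk' hord)
    have : (k : ZMod N) * x = (k' : ZMod N) * x := by
      push_cast at h
      simpa [hx] using h
    simpa [nsmul_eq_mul] using this
  -- uniqueness of indices
  have huniqA : ∀ i i' : ℕ, i < m → i' < m →
      ((α₀ + (i : ℤ) * d : ℤ) : ZMod N) = ((α₀ + (i' : ℤ) * d : ℤ) : ZMod N) → i = i' := by
    intro i i' hi hi' h
    apply hkey i i' (by omega) (by omega)
    push_cast at h ⊢
    exact add_left_cancel h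
  have huniqB : ∀ j j' : ℕ, j < n → j' < n →
      ((β₀ + (j : ℤ) * d : ℤ) : ZMod N) = ((β₀ + (j' : ℤ) * d : ℤ) : ZMod N) → j = j' := by
    intro j j' hj hj' h
    apply hkey j j' (by omega) (by omega)
    push_cast at h ⊢
    exact add_left_cancel h
  -- existence of indices
  have hexA : ∀ a ∈ A, ∃ i : ℕ, i < m ∧ (a : ZMod N) = ((α₀ + (i : ℤ) * d : ℤ) : ZMod N) := by
    intro a ha
    have : (a : ZMod N) ∈ A.image (fun a : ℤ => (a : ZMod N)) :=
      Finset.mem_image_of_mem _ ha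
    rw [hAim] at this
    obtain ⟨i, hi, hie⟩ := Finset.mem_image.mp this
    exact ⟨i, Finset.mem_range.mp hi, hie.symm⟩
  have hexB : ∀ b ∈ B, ∃ j : ℕ, j < n ∧ (b : ZMod N) = ((β₀ + (j : ℤ) * d : ℤ) : ZMod N) := by
    intro b hb
    have : (b : ZMod N) ∈ B.image (fun b : ℤ => (b : ZMod N)) :=
      Finset.mem_image_of_mem _ hb
    rw [hBim] at this
    obtain ⟨j, hj, hje⟩ := Finset.mem_image.mp this
    exact ⟨j, Finset.mem_range.mp hj, hje.symm⟩
  set ψA : ℤ → ℤ × ℤ := fun a =>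
    if h : ∃ i : ℕ, i < m ∧ (a : ZMod N) = ((α₀ + (i : ℤ) * d : ℤ) : ZMod N) then
      ((a - (α₀ + (h.choose : ℤ) * d)) / (N : ℤ), (h.choose : ℤ))
    else 0 with hψA
  set ψB : ℤ → ℤ × ℤ := fun b =>
    if h : ∃ j : ℕ, j < n ∧ (b : ZMod N) = ((β₀ + (j : ℤ) * d : ℤ) : ZMod N) then
      ((b - (β₀ + (h.choose : ℤ) * d)) / (N : ℤ), (h.choose : ℤ))
    else 0 with hψB
  have hspecA : ∀ a ∈ A, ∀ i : ℕ, i < m → (a : ZMod N) = ((α₀ + (i : ℤ) * d : ℤ) : ZMod N) →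
      ψA a = ((a - (α₀ + (i : ℤ) * d)) / (N : ℤ), (i : ℤ)) := by
    intro a _ i hi he
    have h : ∃ i : ℕ, i < m ∧ (a : ZMod N) = ((α₀ + (i : ℤ) * d : ℤ) : ZMod N) := ⟨i, hi, he⟩
    have hc := h.choose_spec
    have : h.choose = i := huniqA _ _ hc.1 hi (hc.2.symm.trans he)
    simp only [hψA, dif_pos h, this]
  have hspecB : ∀ b ∈ B, ∀ j : ℕ, j < n → (b : ZMod N) = ((β₀ + (j : ℤ) * d : ℤ) : ZMod N) →
      ψB b = ((b - (β₀ + (j : ℤ) * d)) / (N : ℤ), (j : ℤ)) := by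
    intro b _ j hj he
    have h : ∃ j : ℕ, j < n ∧ (b : ZMod N) = ((β₀ + (j : ℤ) * d : ℤ) : ZMod N) := ⟨j, hj, he⟩
    have hc := h.choose_spec
    have : h.choose = j := huniqB _ _ hc.1 hj (hc.2.symm.trans he)
    simp only [hψB, dif_pos h, this]
  refine ⟨ψA, ψB, hspecA, hspecB, ?_⟩
  intro a ha a' ha' b hb b' hb'
  obtain ⟨i, hi, hae⟩ := hexA a ha
  obtain ⟨i', hi', hae'⟩ := hexA a' ha'
  obtain ⟨j, hj, hbe⟩ := hexB b hb
  obtain ⟨j', hj', hbe'⟩ := hexB b' hb'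
  have hNdvd : ∀ (z u : ℤ), (z : ZMod N) = (u : ZMod N) → (N : ℤ) ∣ z - u := by
    intro z u h
    exact Int.ModEq.dvd ((ZMod.intCast_eq_intCast_iff _ _ _).mp h).symm
  have hda : (N : ℤ) ∣ a - (α₀ + (i : ℤ) * d) := hNdvd _ _ hae
  have hda' : (N : ℤ) ∣ a' - (α₀ + (i' : ℤ) * d) := hNdvd _ _ hae'
  have hdb : (N : ℤ) ∣ b - (β₀ + (j : ℤ) * d) := hNdvd _ _ hbe
  have hdb' : (N : ℤ) ∣ b' - (β₀ + (j' : ℤ) * d) := hNdvd _ _ hbe'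
  have hN0 : (N : ℤ) ≠ 0 := Int.natCast_ne_zero.mpr (by omega)
  have hqa : a - (α₀ + (i : ℤ) * d) = (N : ℤ) * ((a - (α₀ + (i : ℤ) * d)) / (N : ℤ)) :=
    (Int.mul_ediv_cancel' hda).symm
  have hqa' : a' - (α₀ + (i' : ℤ) * d) = (N : ℤ) * ((a' - (α₀ + (i' : ℤ) * d)) / (N : ℤ)) :=
    (Int.mul_ediv_cancel' hda').symm
  have hqb : b - (β₀ + (j : ℤ) * d) = (N : ℤ) * ((b - (β₀ + (j : ℤ) * d)) / (N : ℤ)) :=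
    (Int.mul_ediv_cancel' hdb).symm
  have hqb' : b' - (β₀ + (j' : ℤ) * d) = (N : ℤ) * ((b' - (β₀ + (j' : ℤ) * d)) / (N : ℤ)) :=
    (Int.mul_ediv_cancel' hdb').symm
  rw [hspecA a ha i hi hae, hspecA a' ha' i' hi' hae', hspecB b hb j hj hbe,
    hspecB b' hb' j' hj' hbe']
  simp only [Prod.mk_add_mk, Prod.mk.injEq]
  constructor
  · rintro ⟨h1, h2⟩
    have h1' : (N : ℤ) * ((a - (α₀ + (i : ℤ) * d)) / (N : ℤ) + (b - (β₀ + (j : ℤ) * d)) / (N : ℤ))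
        = (N : ℤ) * ((a' - (α₀ + (i' : ℤ) * d)) / (N : ℤ) + (b' - (β₀ + (j' : ℤ) * d)) / (N : ℤ)) := by
      rw [h1]
    rw [mul_add, mul_add, ← hqa, ← hqa', ← hqb, ← hqb'] at h1'
    linear_combination h1' + d * h2
  · intro h
    have hsum : ((((i + j : ℕ) : ℤ) * d : ℤ) : ZMod N) = ((((i' + j' : ℕ) : ℤ) * d : ℤ) : ZMod N) := by
      have h1 := hae
      have h2 := hbe
      have h3 := hae'
      have h4 := hbe'
      have hc : ((a + b : ℤ) : ZMod N) = ((a' + b' : ℤ) : ZMod N) := by rw [h]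
      push_cast at h1 h2 h3 h4 hc ⊢
      rw [h1, h2, h3, h4] at hc
      linear_combination hc
    have hij : i + j = i' + j' := hkey (i + j) (i' + j') (by omega) (by omega) hsum
    have hijZ : (i : ℤ) + (j : ℤ) = (i' : ℤ) + (j' : ℤ) := by exact_mod_cast hij
    constructor
    · have hz : (N : ℤ) * ((a - (α₀ + (i : ℤ) * d)) / (N : ℤ) + (b - (β₀ + (j : ℤ) * d)) / (N : ℤ))
          = (N : ℤ) * ((a' - (α₀ + (i' : ℤ) * d)) / (N : ℤ) + (b' - (β₀ + (j' : ℤ) * d)) / (N : ℤ)) := by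
        rw [mul_add, mul_add, ← hqa, ← hqa', ← hqb, ← hqb']
        linear_combination h - d * hijZ
      exact mul_left_cancel₀ hN0 hz
    · exact hijZ
end

section
/- Let A, B ⊆ ℤ be finite nonempty subsets, N ≥ 1 an integer, d ∈ [1, N-1], and suppose the images of A and B modulo N are arithmetic progressions with common difference d satisfying |φ(A)| + |φ(B)| - 1 ≤ ord(d mod N), where φ is reduction mod N. Fix α_0 ∈ A with α_0 mod N the first term of φ(A) and β_0 ∈ B similarly, and set α_i = α_0 + id, β_j = β_0 + jd. Then for a ∈ A lying in residue class α_i + Nℤ and a' ∈ A in class α_{i'} + Nℤ, b ∈ B in class β_j + Nℤ, b' ∈ B in class β_{j'} + Nℤ: a + b = a' + b' holds if and only if i + j = i' + j' and a + b ≡ a' + b' (which forces a - α_i + b - β_j = a' - α_{i'} + b' - β_{j'}). In particular, α_i + β_j ≡ α_{i'} + β_{j'} (mod N) if and only if i + j = i' + j'. -/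
theorem stmt_7 (A B : Finset ℤ) (hA : A.Nonempty) (hB : B.Nonempty)
    (N : ℕ) [NeZero N] (hN : 1 ≤ N) (d : ℤ) (hd1 : 1 ≤ d) (hd2 : d ≤ (N : ℤ) - 1)
    (m n : ℕ) (hm : 1 ≤ m) (hn : 1 ≤ n) (α₀ β₀ : ℤ) (hα₀ : α₀ ∈ A) (hβ₀ : β₀ ∈ B)
    (hAim : A.image (fun a : ℤ => (a : ZMod N))
      = (Finset.range m).image (fun i : ℕ => ((α₀ + (i : ℤ) * d : ℤ) : ZMod N)))
    (hBim : B.image (fun b : ℤ => (b : ZMod N))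
      = (Finset.range n).image (fun j : ℕ => ((β₀ + (j : ℤ) * d : ℤ) : ZMod N)))
    (hord : m + n - 1 ≤ addOrderOf ((d : ℤ) : ZMod N)) :
    ∀ (a a' : ℤ), a ∈ A → a' ∈ A → ∀ (b b' : ℤ), b ∈ B → b' ∈ B →
    ∀ (i i' j j' : ℕ), i < m → i' < m → j < n → j' < n →
    ((a : ZMod N) = ((α₀ + (i : ℤ) * d : ℤ) : ZMod N)) →
    ((a' : ZMod N) = ((α₀ + (i' : ℤ) * d : ℤ) : ZMod N)) →
    ((b : ZMod N) = ((β₀ + (j : ℤ) * d : ℤ) : ZMod N)) →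
    ((b' : ZMod N) = ((β₀ + (j' : ℤ) * d : ℤ) : ZMod N)) →
      ((a + b = a' + b' ↔ (i + j = i' + j' ∧
        (a - (α₀ + (i : ℤ) * d)) + (b - (β₀ + (j : ℤ) * d))
          = (a' - (α₀ + (i' : ℤ) * d)) + (b' - (β₀ + (j' : ℤ) * d)))) ∧
      ((((α₀ + (i : ℤ) * d) + (β₀ + (j : ℤ) * d) : ℤ) : ZMod N)
          = (((α₀ + (i' : ℤ) * d) + (β₀ + (j' : ℤ) * d) : ℤ) : ZMod N) ↔ i + j = i' + j')) := by
  intro a a' ha ha' b b' hb hb' i i' j j' him hi'm hjn hj'n hai hai' hbj hbj'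
  set δ : ZMod N := ((d : ℤ) : ZMod N) with hδ
  have key : ∀ k k' : ℕ, k < m + n - 1 → k' < m + n - 1 →
      (((k : ℤ) * d : ℤ) : ZMod N) = (((k' : ℤ) * d : ℤ) : ZMod N) → k = k' := by
    intro k k' hk hk' hkk
    have : k • δ = k' • δ := by
      rw [nsmul_eq_mul, nsmul_eq_mul, hδ]
      push_cast at hkk ⊢
      exact hkk
    exact nsmul_injOn_Iio_addOrderOf (lt_of_lt_of_le hk hord)
      (lt_of_lt_of_le hk' hord) this
  have hsum : ∀ p q : ℕ, p < m → q < n →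
      ((α₀ + (p : ℤ) * d) + (β₀ + (q : ℤ) * d) : ℤ)
        = (((α₀ + β₀) : ℤ) : ZMod N) + (((p + q : ℕ) : ℤ) * d : ℤ) := by
    intro p q _ _
    push_cast; ring
  have hiff2 : (((α₀ + (i : ℤ) * d) + (β₀ + (j : ℤ) * d) : ℤ) : ZMod N)
      = (((α₀ + (i' : ℤ) * d) + (β₀ + (j' : ℤ) * d) : ℤ) : ZMod N) ↔ i + j = i' + j' := by
    constructor
    · intro h
      rw [hsum i j him hjn, hsum i' j' hi'm hj'n] at h
      have h' : ((((i + j : ℕ) : ℤ) * d : ℤ) : ZMod N) = ((((i' + j' : ℕ) : ℤ) * d : ℤ) : ZMod N) := by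
        exact add_left_cancel h
      exact key _ _ (by omega) (by omega) h'
    · intro h
      have : (i : ℤ) + j = (i' : ℤ) + j' := by exact_mod_cast h
      push_cast
      rw [show (α₀ : ZMod N) + i * d + (β₀ + j * d)
          = α₀ + β₀ + ((i : ZMod N) + j) * d by ring,
        show (α₀ : ZMod N) + i' * d + (β₀ + j' * d)
          = α₀ + β₀ + ((i' : ZMod N) + j') * d by ring]
      congr 2
      exact_mod_cast congrArg (fun z : ℤ => (z : ZMod N)) this
  refine ⟨?_, hiff2⟩
  constructor
  · intro h
    have hmod : (((α₀ + (i : ℤ) * d) + (β₀ + (j : ℤ) * d) : ℤ) : ZMod N)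
        = (((α₀ + (i' : ℤ) * d) + (β₀ + (j' : ℤ) * d) : ℤ) : ZMod N) := by
      push_cast at hai hai' hbj hbj' ⊢
      rw [← hai, ← hbj] at *
      rw [← hai', ← hbj']
      exact_mod_cast congrArg (fun z : ℤ => (z : ZMod N)) h
    have hij := hiff2.1 hmod
    refine ⟨hij, ?_⟩
    have : (i : ℤ) + j = (i' : ℤ) + j' := by exact_mod_cast hij
    nlinarith [this, h]
  · rintro ⟨hij, hoff⟩
    have : (i : ℤ) + j = (i' : ℤ) + j' := by exact_mod_cast hij
    nlinarith [this, hoff]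
end

section
/- Let A, B ⊆ ℤ be finite nonempty subsets with min B = 0 and n = max B ≥ 2, and assume the notation of modular reduction: for i ≥ 0 let A_i ⊆ ℤ/nℤ be the set of residues hit by at least i+1 elements of A, similarly B_j, and note B_1 = {0}, B_0 = φ_n(B), |B_0| = |B| - 1. Let G = ℤ/nℤ, H ≤ G a subgroup, and for z ∈ G/H not in φ_H(A_0) define δ'_z = max({0} ∪ {|(x+H) ∩ A_0| + |(y+H) ∩ B_0| - 1 - |H| : φ_H(x) + φ_H(y) = z}). Then |A + B| ≥ |A_0 + B_0| + |A| + Σ_{z ∈ (G/H) \ φ_H(A_0)} δ'_z. -/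
open Pointwise

theorem stmt_13 (A B : Finset ℤ) (hA : A.Nonempty) (hB : B.Nonempty)
    (n : ℕ) [NeZero n] (hn : 2 ≤ n) (hmin : B.min' hB = 0) (hmax : B.max' hB = (n : ℤ))
    (H : AddSubgroup (ZMod n)) [DecidablePred (· ∈ H)]
    (A0 B0 : Finset (ZMod n))
    (hA0 : A0 = A.image (fun a : ℤ => (a : ZMod n)))
    (hB0 : B0 = B.image (fun b : ℤ => (b : ZMod n)))
    (δ' : (ZMod n ⧸ H) → ℤ)
    (hδ' : ∀ z : ZMod n ⧸ H, δ' z = sSup ({0} ∪ {k : ℤ | ∃ x y : ZMod n,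
        (QuotientAddGroup.mk x : ZMod n ⧸ H) + QuotientAddGroup.mk y = z ∧
        k = ((A0.filter (fun u => u - x ∈ H)).card : ℤ)
          + ((B0.filter (fun v => v - y ∈ H)).card : ℤ) - 1 - (Nat.card H : ℤ)})) :
    ((A0 + B0).card : ℤ) + A.card
      + ∑ᶠ z ∈ {z : ZMod n ⧸ H |
          z ∉ (fun x : ZMod n => (QuotientAddGroup.mk x : ZMod n ⧸ H)) '' (A0 : Set (ZMod n))},
        δ' z
      ≤ ((A + B).card : ℤ) := by
  classical
  letI : Fintype (ZMod n ⧸ H) := Fintype.ofFinite _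
  set q : ZMod n → ZMod n ⧸ H := fun c => QuotientAddGroup.mk c with hqdef
  set g : ℤ → ZMod n ⧸ H := fun a => q (a : ZMod n) with hgdef
  have h0B : (0 : ℤ) ∈ B := hmin ▸ B.min'_mem hB
  have hnB : (n : ℤ) ∈ B := hmax ▸ B.max'_mem hB
  have hnpos : 0 < n := Nat.pos_of_ne_zero (NeZero.ne n)
  -- class-level count
  have Lc : ∀ c : ZMod n,
      (A.filter (fun a : ℤ => (a : ZMod n) = c)).card + (if c ∈ A0 + B0 then 1 else 0)
        ≤ ((A + B).filter (fun s : ℤ => (s : ZMod n) = c)).card := by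
    intro c
    by_cases hc : c ∈ A0 + B0
    · simp only [if_pos hc]
      set S := A.filter (fun a : ℤ => (a : ZMod n) = c) with hS
      rcases S.eq_empty_or_nonempty with hSe | hSne
      · rw [hSe]
        simp only [Finset.card_empty, zero_add]
        rw [Finset.mem_add] at hc
        obtain ⟨a0, ha0, b0, hb0, hab⟩ := hc
        rw [hA0, Finset.mem_image] at ha0
        rw [hB0, Finset.mem_image] at hb0
        obtain ⟨a, haA, rfl⟩ := ha0
        obtain ⟨b, hbB, rfl⟩ := hb0
        refine Finset.card_pos.2 ⟨a + b, Finset.mem_filter.2 ⟨Finset.add_mem_add haA hbB, ?_⟩⟩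
        push_cast
        exact hab
      · set M := S.max' hSne with hM
        have hMS : M ∈ S := S.max'_mem hSne
        have hMA : M ∈ A := (Finset.mem_filter.1 hMS).1
        have hMc : (M : ZMod n) = c := (Finset.mem_filter.1 hMS).2
        have hnotmem : M + n ∉ S := by
          intro hmem
          have := S.le_max' _ hmem
          omega
        have hsub : insert (M + n) S ⊆ (A + B).filter (fun s : ℤ => (s : ZMod n) = c) := by
          intro s hs
          rcases Finset.mem_insert.1 hs with rfl | hsS
          · refine Finset.mem_filter.2 ⟨Finset.add_mem_add hMA hnB, ?_⟩
            push_cast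
            rw [ZMod.natCast_self, add_zero, hMc]
          · obtain ⟨hsA, hsc⟩ := Finset.mem_filter.1 hsS
            refine Finset.mem_filter.2 ⟨?_, hsc⟩
            have := Finset.add_mem_add hsA h0B
            rwa [add_zero] at this
        calc S.card + 1 = (insert (M + n) S).card := (Finset.card_insert_of_notMem hnotmem).symm
          _ ≤ _ := Finset.card_le_card hsub
    · simp only [if_neg hc, add_zero]
      have hfe : A.filter (fun a : ℤ => (a : ZMod n) = c) = ∅ := by
        rw [Finset.filter_eq_empty_iff]
        intro a haA hac
        apply hc
        have hcA0 : c ∈ A0 := by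
          rw [hA0, Finset.mem_image]; exact ⟨a, haA, hac⟩
        have h0B0 : (0 : ZMod n) ∈ B0 := by
          rw [hB0, Finset.mem_image]
          exact ⟨0, h0B, by push_cast; rfl⟩
        have := Finset.add_mem_add hcA0 h0B0
        rwa [add_zero] at this
      rw [hfe]
      simp
  -- grouping sums over residue classes within a coset
  have sumfib : ∀ (s : Finset ℤ) (z : ZMod n ⧸ H),
      (s.filter (fun a => g a = z)).card
        = ∑ c ∈ Finset.univ.filter (fun c => q c = z),
            (s.filter (fun a : ℤ => (a : ZMod n) = c)).card := by
    intro s z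
    rw [Finset.card_eq_sum_card_fiberwise (f := fun a : ℤ => (a : ZMod n))
        (t := Finset.univ.filter (fun c => q c = z))
        (fun a ha => Finset.mem_filter.2 ⟨Finset.mem_univ _, (Finset.mem_filter.1 ha).2⟩)]
    refine Finset.sum_congr rfl fun c hc => ?_
    have hqc : q c = z := (Finset.mem_filter.1 hc).2
    rw [Finset.filter_filter]
    congr 1
    apply Finset.filter_congr
    intro a _
    constructor
    · exact fun h => h.2
    · intro h
      refine ⟨?_, h⟩
      show q ((a : ℤ) : ZMod n) = z
      rw [h]; exact hqc
  have sumfib2 : ∀ z : ZMod n ⧸ H,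
      ((A0 + B0).filter (fun c => q c = z)).card
        = ∑ c ∈ Finset.univ.filter (fun c => q c = z), (if c ∈ A0 + B0 then 1 else 0) := by
    intro z
    rw [← Finset.card_filter]
    congr 1
    ext c
    simp only [Finset.mem_filter, Finset.mem_univ, true_and]
    tauto
  have key1 : ∀ z : ZMod n ⧸ H,
      (A.filter (fun a => g a = z)).card + ((A0 + B0).filter (fun c => q c = z)).card
        ≤ ((A + B).filter (fun a => g a = z)).card := by
    intro z
    rw [sumfib A z, sumfib (A + B) z, sumfib2 z, ← Finset.sum_add_distrib]
    exact Finset.sum_le_sum fun c _ => Lc c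
  -- subgroup cardinality helper
  have hHcard : ((H : Set (ZMod n)).toFinset).card = Nat.card H := by
    rw [Set.toFinset_card, Nat.card_eq_fintype_card]
    rfl
  -- fiber cardinality
  have fibcard : ∀ w : ZMod n,
      (Finset.univ.filter (fun c => q c = q w)).card = Nat.card H := by
    intro w
    have heq : Finset.univ.filter (fun c => q c = q w)
        = (H : Set (ZMod n)).toFinset.image (· + w) := by
      ext c
      simp only [Finset.mem_filter, Finset.mem_univ, true_and, Finset.mem_image,
        Set.mem_toFinset, SetLike.mem_coe]
      constructor
      · intro h
        have hm : -c + w ∈ H := QuotientAddGroup.eq.1 h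
        refine ⟨c - w, ?_, sub_add_cancel c w⟩
        have : -(-c + w) ∈ H := H.neg_mem hm
        simpa [neg_add_rev, sub_eq_add_neg, add_comm] using this
      · rintro ⟨h, hh, rfl⟩
        apply QuotientAddGroup.eq.2
        have : -h ∈ H := H.neg_mem hh
        simpa [neg_add_rev, add_assoc] using this
    rw [heq, Finset.card_image_of_injective _ (add_left_injective w), hHcard]
  -- the δ' bound
  have key2 : ∀ z : ZMod n ⧸ H,
      (((A0 + B0).filter (fun c => q c = z)).card : ℤ) + δ' z
        ≤ (((A + B).filter (fun a => g a = z)).card : ℤ) := by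
    intro z
    have hab_le : ((A0 + B0).filter (fun c => q c = z)).card
        ≤ ((A + B).filter (fun a => g a = z)).card :=
      le_trans (Nat.le_add_left _ _) (key1 z)
    have hsup : δ' z ≤ (((A + B).filter (fun a => g a = z)).card : ℤ)
        - (((A0 + B0).filter (fun c => q c = z)).card : ℤ) := by
      rw [hδ' z]
      refine csSup_le ⟨(0:ℤ), Or.inl rfl⟩ ?_
      rintro k (hk | ⟨x, y, hz, hk⟩)
      · simp only [Set.mem_singleton_iff] at hk
        subst hk
        have := hab_le
        push_cast
        omega
      · -- k = |A'| + |B'| - 1 - |H|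
        set A' := A0.filter (fun u => u - x ∈ H) with hA'
        set B' := B0.filter (fun v => v - y ∈ H) with hB'
        by_cases hkle : k ≤ 0
        · have := hab_le
          push_cast
          omega
        push_neg at hkle
        have hA'le : A'.card ≤ Nat.card H := by
          rw [← hHcard]
          apply Finset.card_le_card_of_injOn (fun u => u - x)
          · intro u hu
            simp only [Set.mem_toFinset, SetLike.mem_coe]
            exact (Finset.mem_filter.1 hu).2
          · intro u _ v _ huv
            simpa using sub_left_injective huv
        have hB'le : B'.card ≤ Nat.card H := by
          rw [← hHcard]
          apply Finset.card_le_card_of_injOn (fun v => v - y)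
          · intro v hv
            simp only [Set.mem_toFinset, SetLike.mem_coe]
            exact (Finset.mem_filter.1 hv).2
          · intro u _ v _ huv
            simpa using sub_left_injective huv
        set At := A.filter (fun a : ℤ => (a : ZMod n) - x ∈ H) with hAt
        set Bt := B.filter (fun b : ℤ => (b : ZMod n) - y ∈ H) with hBt
        have himA : At.image (fun a : ℤ => (a : ZMod n)) = A' := by
          ext u
          simp only [hA', hAt, hA0, Finset.mem_image, Finset.mem_filter]
          constructor
          · rintro ⟨a, ⟨haA, hm⟩, rfl⟩
            exact ⟨⟨a, haA, rfl⟩, hm⟩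
          · rintro ⟨⟨a, haA, rfl⟩, hm⟩
            exact ⟨a, ⟨haA, hm⟩, rfl⟩
        have himB : Bt.image (fun b : ℤ => (b : ZMod n)) = B' := by
          ext u
          simp only [hB', hBt, hB0, Finset.mem_image, Finset.mem_filter]
          constructor
          · rintro ⟨b, ⟨hbB, hm⟩, rfl⟩
            exact ⟨⟨b, hbB, rfl⟩, hm⟩
          · rintro ⟨⟨b, hbB, rfl⟩, hm⟩
            exact ⟨b, ⟨hbB, hm⟩, rfl⟩
        have hA'At : A'.card ≤ At.card := by
          rw [← himA]; exact Finset.card_image_le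
        have hB'Bt : B'.card ≤ Bt.card := by
          rw [← himB]; exact Finset.card_image_le
        have hA'pos : 0 < A'.card := by omega
        have hB'pos : 0 < B'.card := by omega
        have hAtne : At.Nonempty := Finset.card_pos.1 (lt_of_lt_of_le hA'pos hA'At)
        have hBtne : Bt.Nonempty := Finset.card_pos.1 (lt_of_lt_of_le hB'pos hB'Bt)
        have hCD : At.card + Bt.card - 1 ≤ (At + Bt).card :=
          cauchy_davenport_add_of_linearOrder_isCancelAdd hAtne hBtne
        have hzw : z = q (x + y) := by
          rw [← hz, hqdef]
          rfl
        have hsub : At + Bt ⊆ (A + B).filter (fun a => g a = z) := by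
          intro s hs
          rw [Finset.mem_add] at hs
          obtain ⟨a, ha, b, hb, rfl⟩ := hs
          obtain ⟨haA, hma⟩ := Finset.mem_filter.1 ha
          obtain ⟨hbB, hmb⟩ := Finset.mem_filter.1 hb
          refine Finset.mem_filter.2 ⟨Finset.add_mem_add haA hbB, ?_⟩
          rw [hzw, hgdef]
          simp only
          push_cast
          apply QuotientAddGroup.eq.2
          have hm : ((a : ZMod n) + b) - (x + y) ∈ H := by
            rw [← sub_add_sub_comm]
            exact H.add_mem hma hmb
          have : -(((a : ZMod n) + b) - (x + y)) ∈ H := H.neg_mem hm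
          simpa [neg_sub, sub_eq_add_neg, add_comm] using this
        have hNge : (At + Bt).card ≤ ((A + B).filter (fun a => g a = z)).card :=
          Finset.card_le_card hsub
        have hfib : ((A0 + B0).filter (fun c => q c = z)).card ≤ Nat.card H := by
          rw [hzw]
          calc ((A0 + B0).filter (fun c => q c = q (x + y))).card
              ≤ (Finset.univ.filter (fun c => q c = q (x + y))).card :=
                Finset.card_le_card (Finset.filter_subset_filter _ (Finset.subset_univ _))
            _ = Nat.card H := fibcard (x + y)
        rw [hk]
        push_cast
        omega
    linarith
  -- assemble everything
  have hABsum : (A + B).card = ∑ z : ZMod n ⧸ H, ((A + B).filter (fun a => g a = z)).card :=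
    Finset.card_eq_sum_card_fiberwise fun a _ => Finset.mem_univ _
  have hAsum : A.card = ∑ z : ZMod n ⧸ H, (A.filter (fun a => g a = z)).card :=
    Finset.card_eq_sum_card_fiberwise fun a _ => Finset.mem_univ _
  have hAB0sum : (A0 + B0).card
      = ∑ z : ZMod n ⧸ H, ((A0 + B0).filter (fun c => q c = z)).card :=
    Finset.card_eq_sum_card_fiberwise fun c _ => Finset.mem_univ _
  have hfin : ∑ᶠ z ∈ {z : ZMod n ⧸ H |
        z ∉ (fun x : ZMod n => (QuotientAddGroup.mk x : ZMod n ⧸ H)) '' (A0 : Set (ZMod n))}, δ' z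
      = ∑ z ∈ (A0.image q)ᶜ, δ' z := by
    rw [← finsum_mem_coe_finset]
    congr 1
    ext z
    simp [hqdef, Set.mem_image, Finset.mem_image]
  have hsplit : ∑ z ∈ (A0.image q)ᶜ, δ' z
      = ∑ z : ZMod n ⧸ H, (if z ∈ A0.image q then 0 else δ' z) := by
    rw [Finset.sum_ite, Finset.sum_const_zero, zero_add]
    congr 1
    ext z
    simp
  rw [hfin, hsplit, hABsum, hAsum, hAB0sum]
  push_cast
  rw [← Finset.sum_add_distrib, ← Finset.sum_add_distrib]
  apply Finset.sum_le_sum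
  intro z _
  by_cases hz : z ∈ A0.image q
  · rw [if_pos hz, add_zero]
    have := key1 z
    push_cast
    omega
  · rw [if_neg hz]
    have ha0 : A.filter (fun a => g a = z) = ∅ := by
      rw [Finset.filter_eq_empty_iff]
      intro a haA hga
      apply hz
      rw [Finset.mem_image]
      refine ⟨(a : ZMod n), ?_, hga⟩
      rw [hA0, Finset.mem_image]
      exact ⟨a, haA, rfl⟩
    rw [ha0]
    have := key2 z
    simp only [Finset.card_empty, Nat.cast_zero, add_zero]
    linarith
end

section
/- Let A, B ⊆ ℤ be finite nonempty subsets with min B = 0, n = max B ≥ 2, and suppose φ_n(A) + φ_n(B \ {n}) = ℤ/nℤ (i.e., A_0 + B_0 = ℤ/nℤ in the modular reduction notation). Then |A + B| ≥ n + |A|, and consequently B is contained in the arithmetic progression [0, n] of length n + 1 ≤ |B| + r + 1 where r = |A+B| - |A| - |B|. -/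
open Pointwise

theorem stmt_14 (A B : Finset ℤ) (hA : A.Nonempty) (hB : B.Nonempty)
    (n : ℕ) [NeZero n] (hn : 2 ≤ n) (hmin : B.min' hB = 0) (hmax : B.max' hB = (n : ℤ))
    (hcover : A.image (fun a : ℤ => (a : ZMod n)) + B.image (fun b : ℤ => (b : ZMod n))
      = Finset.univ) :
    (n : ℤ) + A.card ≤ ((A + B).card : ℤ) ∧
    B ⊆ Finset.Icc 0 (n : ℤ) ∧
    (n : ℤ) + 1 ≤ (B.card : ℤ) + (((A + B).card : ℤ) - A.card - B.card) + 1 := by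
  have h0B : (0 : ℤ) ∈ B := hmin ▸ B.min'_mem hB
  have hnB : (n : ℤ) ∈ B := hmax ▸ B.max'_mem hB
  have key : ∀ r : ZMod n,
      (A.filter (fun a : ℤ => (a : ZMod n) = r)).card + 1
        ≤ ((A + B).filter (fun x : ℤ => (x : ZMod n) = r)).card := by
    intro r
    by_cases hne : (A.filter (fun a : ℤ => (a : ZMod n) = r)).Nonempty
    · set Ar := A.filter (fun a : ℤ => (a : ZMod n) = r) with hAr
      have hm := Ar.max'_mem hne
      have hsub : insert (Ar.max' hne + n) Ar
          ⊆ (A + B).filter (fun x : ℤ => (x : ZMod n) = r) := by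
        intro x hx
        simp only [Finset.mem_insert] at hx
        rcases hx with rfl | hx
        · simp only [hAr, Finset.mem_filter] at hm ⊢
          refine ⟨Finset.add_mem_add hm.1 hnB, ?_⟩
          push_cast
          simp [hm.2]
        · simp only [hAr, Finset.mem_filter] at hx ⊢
          refine ⟨?_, hx.2⟩
          simpa using Finset.add_mem_add hx.1 h0B
      calc Ar.card + 1 = (insert (Ar.max' hne + n) Ar).card := by
            rw [Finset.card_insert_of_notMem]
            intro h
            have := Ar.le_max' _ h
            omega
        _ ≤ _ := Finset.card_le_card hsub
    · rw [Finset.not_nonempty_iff_eq_empty] at hne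
      rw [hne, Finset.card_empty]
      have hr : r ∈ A.image (fun a : ℤ => (a : ZMod n))
          + B.image (fun b : ℤ => (b : ZMod n)) := by
        rw [hcover]; exact Finset.mem_univ r
      rw [Finset.mem_add] at hr
      obtain ⟨y, hy, z, hz, hyz⟩ := hr
      simp only [Finset.mem_image] at hy hz
      obtain ⟨a, ha, rfl⟩ := hy
      obtain ⟨b, hb, rfl⟩ := hz
      have : a + b ∈ (A + B).filter (fun x : ℤ => (x : ZMod n) = r) := by
        simp only [Finset.mem_filter]
        exact ⟨Finset.add_mem_add ha hb, by push_cast; exact hyz⟩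
      have := Finset.card_pos.mpr ⟨_, this⟩
      omega
  have hcardAB : (A + B).card = ∑ r : ZMod n,
      ((A + B).filter (fun x : ℤ => (x : ZMod n) = r)).card :=
    Finset.card_eq_sum_card_fiberwise (fun x _ => Finset.mem_univ _)
  have hcardA : A.card = ∑ r : ZMod n,
      (A.filter (fun a : ℤ => (a : ZMod n) = r)).card :=
    Finset.card_eq_sum_card_fiberwise (fun x _ => Finset.mem_univ _)
  have hmain : n + A.card ≤ (A + B).card := by
    have hsum : ∑ r : ZMod n, ((A.filter (fun a : ℤ => (a : ZMod n) = r)).card + 1)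
        ≤ ∑ r : ZMod n, ((A + B).filter (fun x : ℤ => (x : ZMod n) = r)).card :=
      Finset.sum_le_sum (fun r _ => key r)
    rw [Finset.sum_add_distrib, Finset.sum_const, Finset.card_univ, ZMod.card,
      smul_eq_mul, mul_one] at hsum
    omega
  have hBsub : B ⊆ Finset.Icc 0 (n : ℤ) := by
    intro b hb
    rw [Finset.mem_Icc]
    exact ⟨hmin ▸ B.min'_le b hb, hmax ▸ B.le_max' b hb⟩
  refine ⟨by exact_mod_cast hmain, hBsub, ?_⟩
  have := hmain
  push_cast
  omega
end

section
/- Let A, B ⊆ ℤ be finite nonempty subsets such that gcd*(A) = d ≥ 2 (i.e., all elements of A are congruent modulo d) while B meets at least t ≥ 2 distinct residue classes modulo d. Then |A + B| ≥ t(|A| - 1) + |B| ≥ 2|A| + |B| - 2. -/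
open Pointwise

theorem stmt_15 (A B : Finset ℤ) (hA : A.Nonempty) (hB : B.Nonempty)
    (d : ℤ) (hd : 2 ≤ d) (hAd : ∀ a ∈ A, ∀ a' ∈ A, d ∣ a - a')
    (t : ℕ) (ht : t = (B.image (fun b => b % d)).card) (ht2 : 2 ≤ t) :
    (t : ℤ) * (A.card - 1) + B.card ≤ ((A + B).card : ℤ) ∧
    2 * (A.card : ℤ) + B.card - 2 ≤ ((A + B).card : ℤ) := by
  set R := B.image (fun b => b % d) with hR
  set Bf : ℤ → Finset ℤ := fun r => B.filter (fun b => b % d = r) with hBf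
  have hBfne : ∀ r ∈ R, (Bf r).Nonempty := by
    intro r hr
    rw [hR, Finset.mem_image] at hr
    obtain ⟨b, hb, hbr⟩ := hr
    exact ⟨b, Finset.mem_filter.2 ⟨hb, hbr⟩⟩
  -- disjointness of A + Bf r over r ∈ R
  have hdisj : ∀ r ∈ R, ∀ s ∈ R, r ≠ s → Disjoint (A + Bf r) (A + Bf s) := by
    intro r hr s hs hrs
    rw [Finset.disjoint_left]
    rintro x hx hx'
    rw [Finset.mem_add] at hx hx'
    obtain ⟨a, ha, b, hb, rfl⟩ := hx
    obtain ⟨a', ha', b', hb', he⟩ := hx'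
    rw [hBf, Finset.mem_filter] at hb hb'
    have hd1 : d ∣ b' - b := by
      have h1 := hAd a ha a' ha'
      have : b' - b = a - a' + ((a' + b') - (a + b)) := by ring
      rw [this, he, sub_self, add_zero]
      exact h1
    exact hrs (by rw [← hb.2, ← hb'.2]; exact Int.modEq_iff_dvd.2 hd1)
  have hsub : R.biUnion (fun r => A + Bf r) ⊆ A + B := by
    intro x hx
    rw [Finset.mem_biUnion] at hx
    obtain ⟨r, _, hx⟩ := hx
    rw [Finset.mem_add] at hx ⊢
    obtain ⟨a, ha, b, hb, rfl⟩ := hx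
    exact ⟨a, ha, b, (Finset.mem_filter.1 hb).1, rfl⟩
  have hcard : ∑ r ∈ R, (A + Bf r).card ≤ (A + B).card := by
    rw [← Finset.card_biUnion hdisj]
    exact Finset.card_le_card hsub
  have hlow : ∀ r ∈ R, A.card - 1 + (Bf r).card ≤ (A + Bf r).card := by
    intro r hr
    have h1 := cauchy_davenport_add_of_linearOrder_isCancelAdd hA (hBfne r hr)
    have h2 := hA.card_pos
    have h3 := (hBfne r hr).card_pos
    omega
  have hBsum : ∑ r ∈ R, (Bf r).card = B.card := by
    rw [hBf]
    exact (Finset.card_eq_sum_card_fiberwise (fun b hb => Finset.mem_image_of_mem _ hb)).symm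
  have key : t * (A.card - 1) + B.card ≤ (A + B).card := by
    calc t * (A.card - 1) + B.card = ∑ r ∈ R, (A.card - 1 + (Bf r).card) := by
          rw [Finset.sum_add_distrib, Finset.sum_const, hBsum, ht, smul_eq_mul]
      _ ≤ ∑ r ∈ R, (A + Bf r).card := Finset.sum_le_sum hlow
      _ ≤ (A + B).card := hcard
  have hA1 : 1 ≤ A.card := hA.card_pos
  constructor
  · push_cast [← Nat.cast_sub hA1]
    exact_mod_cast key
  · have : 2 * (A.card - 1) + B.card ≤ (A + B).card := le_trans (by nlinarith) key
    push_cast [← Nat.cast_sub hA1] at *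
    omega
end

section
/- Let A, B ⊆ ℤ be finite nonempty subsets, decompose A = ⋃_{i=1}^{p} X_i and A + B = ⋃_{k=1}^{q} Z_k into maximal nonempty classes of elements congruent modulo n (so p = |φ_n(A)|, q = |φ_n(A+B)| = |φ_n(A)+φ_n(B)|), and let A' be obtained from A by deleting the smallest element of each X_i. Then |A'| = |A| - |φ_n(A)| and |A' + B| ≤ |A + B| - |φ_n(A) + φ_n(B)|. -/
open Pointwise

open Classical in
lemma minima_card_aux (n : ℕ) (S : Finset ℤ) :
    (S.filter (fun s => ∀ t ∈ S, (((t : ℤ) : ZMod n) = ((s : ℤ) : ZMod n)) → s ≤ t)).card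
      = (S.image (fun a : ℤ => (a : ZMod n))).card := by
  apply Finset.card_bij (fun s _ => ((s : ℤ) : ZMod n))
  · intro s hs
    exact Finset.mem_image_of_mem _ (Finset.mem_filter.mp hs).1
  · intro s₁ h₁ s₂ h₂ h
    obtain ⟨hs₁, hm₁⟩ := Finset.mem_filter.mp h₁
    obtain ⟨hs₂, hm₂⟩ := Finset.mem_filter.mp h₂
    exact le_antisymm (hm₁ s₂ hs₂ h.symm) (hm₂ s₁ hs₁ h)
  · intro c hc
    obtain ⟨a, ha, hac⟩ := Finset.mem_image.mp hc
    have hne : (S.filter (fun s => ((s : ℤ) : ZMod n) = c)).Nonempty :=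
      ⟨a, Finset.mem_filter.mpr ⟨ha, hac⟩⟩
    set m := (S.filter (fun s => ((s : ℤ) : ZMod n) = c)).min' hne with hm
    have hmmem := (S.filter (fun s => ((s : ℤ) : ZMod n) = c)).min'_mem hne
    obtain ⟨hmS, hmc⟩ := Finset.mem_filter.mp hmmem
    refine ⟨m, Finset.mem_filter.mpr ⟨hmS, ?_⟩, hmc⟩
    intro t ht htm
    exact Finset.min'_le _ t (Finset.mem_filter.mpr ⟨ht, by rw [htm, hmc]⟩)

theorem stmt_16 (A B : Finset ℤ) (hA : A.Nonempty) (hB : B.Nonempty)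
    (n : ℕ) (hn : 1 ≤ n)
    (A' : Finset ℤ)
    (hA' : A' = A.filter (fun a => ∃ a' ∈ A, (((a' : ℤ) : ZMod n) = ((a : ℤ) : ZMod n) ∧ a' < a))) :
    (A'.card : ℤ) = A.card - (A.image (fun a : ℤ => (a : ZMod n))).card ∧
    ((A' + B).card : ℤ) ≤ ((A + B).card : ℤ)
      - ((A.image (fun a : ℤ => (a : ZMod n)) + B.image (fun b : ℤ => (b : ZMod n))).card : ℤ) := by
  classical

  -- minima of A
  set MA := A.filter (fun s => ∀ t ∈ A, (((t : ℤ) : ZMod n) = ((s : ℤ) : ZMod n)) → s ≤ t) with hMA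
  have hA'eq : A' = A.filter (fun s => ¬ (∀ t ∈ A, (((t : ℤ) : ZMod n) = ((s : ℤ) : ZMod n)) → s ≤ t)) := by
    rw [hA']
    apply Finset.filter_congr
    intro a _
    simp only [not_forall, not_le, exists_prop]
  have hcard1 : MA.card + A'.card = A.card := by
    rw [hA'eq, hMA]
    exact Finset.card_filter_add_card_filter_not _
  have hMAcard : MA.card = (A.image (fun a : ℤ => (a : ZMod n))).card :=
    minima_card_aux n A
  have part1 : (A'.card : ℤ) = A.card - (A.image (fun a : ℤ => (a : ZMod n))).card := by
    rw [← hMAcard]; omega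
  refine ⟨part1, ?_⟩
  -- image of sum
  have himage : (A + B).image (fun a : ℤ => (a : ZMod n))
      = A.image (fun a : ℤ => (a : ZMod n)) + B.image (fun b : ℤ => (b : ZMod n)) := by
    have := Finset.image_add (f := Int.castRingHom (ZMod n)) (s := A) (t := B)
    simpa using this
  set M := (A + B).filter
      (fun s => ∀ t ∈ A + B, (((t : ℤ) : ZMod n) = ((s : ℤ) : ZMod n)) → s ≤ t) with hM
  have hMcard : M.card = ((A + B).image (fun a : ℤ => (a : ZMod n))).card :=
    minima_card_aux n (A + B)
  have hsub : A' + B ⊆ (A + B) \ M := by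
    intro x hx
    obtain ⟨a', ha', b, hb, rfl⟩ := Finset.mem_add.mp hx
    rw [hA'] at ha'
    obtain ⟨haA, a0, ha0A, hcong, hlt⟩ := Finset.mem_filter.mp ha'
    have hxAB : a' + b ∈ A + B := Finset.add_mem_add haA hb
    refine Finset.mem_sdiff.mpr ⟨hxAB, ?_⟩
    intro hxM
    obtain ⟨_, hmin⟩ := Finset.mem_filter.mp hxM
    have h0 : a0 + b ∈ A + B := Finset.add_mem_add ha0A hb
    have hc : ((a0 + b : ℤ) : ZMod n) = ((a' + b : ℤ) : ZMod n) := by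
      push_cast
      rw [hcong]
    have := hmin (a0 + b) h0 hc
    omega
  have hMsub : M ⊆ A + B := Finset.filter_subset _ _
  have hcard2 : (A' + B).card ≤ (A + B).card - M.card := by
    calc (A' + B).card ≤ ((A + B) \ M).card := Finset.card_le_card hsub
    _ = (A + B).card - M.card := Finset.card_sdiff_of_subset hMsub
  have hMle : M.card ≤ (A + B).card := Finset.card_le_card hMsub
  have : ((A + B).image (fun a : ℤ => (a : ZMod n))).card
      = (A.image (fun a : ℤ => (a : ZMod n)) + B.image (fun b : ℤ => (b : ZMod n))).card := by
    rw [himage]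
  omega
end

section
/- Let G be an abelian group, H ≤ G a finite subgroup, and A, B ⊆ G finite nonempty subsets. Suppose A_∅ ⊆ A is a nonempty subset of an H-coset such that A \ A_∅ is H-periodic (a union of H-cosets), B_∅ ⊆ B is a nonempty subset of an H-coset such that B \ B_∅ is H-periodic, and φ_H(A_∅) + φ_H(B_∅) is a unique expression element in φ_H(A) + φ_H(B). Then (A + B) \ (A_∅ + B_∅) is H-periodic; that is, A_∅ + B_∅ induces an H-quasi-periodic decomposition of A + B. -/
open Pointwise

theorem stmt_19 {G : Type*} [AddCommGroup G] (H : AddSubgroup G) (hH : (H : Set G).Finite)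
    (A B : Set G) (hAfin : A.Finite) (hBfin : B.Finite) (hAne : A.Nonempty) (hBne : B.Nonempty)
    (Ae Be : Set G) (hAe : Ae ⊆ A) (hBe : Be ⊆ B) (hAene : Ae.Nonempty) (hBene : Be.Nonempty)
    (hAecoset : ∃ g : G, Ae ⊆ {x : G | x - g ∈ H})
    (hBecoset : ∃ g : G, Be ⊆ {x : G | x - g ∈ H})
    (hAper : (A \ Ae) + (H : Set G) = A \ Ae)
    (hBper : (B \ Be) + (H : Set G) = B \ Be)
    (a₀ : G) (ha₀ : a₀ ∈ Ae) (b₀ : G) (hb₀ : b₀ ∈ Be)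
    (huniq : ∃! p : (G ⧸ H) × (G ⧸ H),
      p.1 ∈ (QuotientAddGroup.mk '' A) ∧ p.2 ∈ (QuotientAddGroup.mk '' B) ∧
      p.1 + p.2 = (QuotientAddGroup.mk a₀ : G ⧸ H) + QuotientAddGroup.mk b₀) :
    ((A + B) \ (Ae + Be)) + (H : Set G) = (A + B) \ (Ae + Be) := by
  obtain ⟨gA, hgA⟩ := hAecoset
  obtain ⟨gB, hgB⟩ := hBecoset
  -- helper: if a ∈ A and mk a = mk a₀, then a ∈ Ae
  have keyA : ∀ a ∈ A, (QuotientAddGroup.mk a : G ⧸ H) = QuotientAddGroup.mk a₀ → a ∈ Ae := by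
    intro a ha heq
    by_contra hna
    have hmem : a ∈ A \ Ae := ⟨ha, hna⟩
    have hH' : a₀ - a ∈ H := by
      rwa [QuotientAddGroup.eq, neg_add_eq_sub] at heq
    have : a₀ ∈ (A \ Ae) + (H : Set G) := ⟨a, hmem, a₀ - a, hH', by simp⟩
    rw [hAper] at this
    exact this.2 ha₀
  have keyB : ∀ b ∈ B, (QuotientAddGroup.mk b : G ⧸ H) = QuotientAddGroup.mk b₀ → b ∈ Be := by
    intro b hb heq
    by_contra hnb
    have hmem : b ∈ B \ Be := ⟨hb, hnb⟩
    have hH' : b₀ - b ∈ H := by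
      rwa [QuotientAddGroup.eq, neg_add_eq_sub] at heq
    have : b₀ ∈ (B \ Be) + (H : Set G) := ⟨b, hmem, b₀ - b, hH', by simp⟩
    rw [hBper] at this
    exact this.2 hb₀
  apply Set.Subset.antisymm
  · rintro x ⟨y, hy, h, hh, rfl⟩
    obtain ⟨⟨a, ha, b, hb, rfl⟩, hny⟩ := hy
    constructor
    · by_cases hae : a ∈ Ae
      · by_cases hbe : b ∈ Be
        · exact absurd ⟨a, hae, b, hbe, rfl⟩ hny
        · have : b + h ∈ B \ Be := by
            rw [← hBper]; exact ⟨b, ⟨hb, hbe⟩, h, hh, rfl⟩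
          exact ⟨a, ha, b + h, this.1, by beta_reduce; abel⟩
      · have : a + h ∈ A \ Ae := by
          rw [← hAper]; exact ⟨a, ⟨ha, hae⟩, h, hh, rfl⟩
        exact ⟨a + h, this.1, b, hb, by beta_reduce; abel⟩
    · rintro ⟨a', ha', b', hb', heq⟩
      -- mk a' = mk a₀, mk b' = mk b₀
      have ea' : (QuotientAddGroup.mk a' : G ⧸ H) = QuotientAddGroup.mk a₀ := by
        rw [QuotientAddGroup.eq, neg_add_eq_sub]
        have h1 := hgA ha'
        have h2 := hgA ha₀
        simpa using H.sub_mem h2 h1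
      have eb' : (QuotientAddGroup.mk b' : G ⧸ H) = QuotientAddGroup.mk b₀ := by
        rw [QuotientAddGroup.eq, neg_add_eq_sub]
        have h1 := hgB hb'
        have h2 := hgB hb₀
        simpa using H.sub_mem h2 h1
      have hsum : (QuotientAddGroup.mk a : G ⧸ H) + QuotientAddGroup.mk b
          = QuotientAddGroup.mk a₀ + QuotientAddGroup.mk b₀ := by
        have e1 : (QuotientAddGroup.mk (a + b) : G ⧸ H) = QuotientAddGroup.mk (a + b + h) := by
          rw [QuotientAddGroup.eq, neg_add_eq_sub]
          simpa using hh
        calc (QuotientAddGroup.mk a : G ⧸ H) + QuotientAddGroup.mk b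
            = QuotientAddGroup.mk (a + b) := rfl
          _ = QuotientAddGroup.mk (a + b + h) := e1
          _ = QuotientAddGroup.mk (a' + b') := congrArg QuotientAddGroup.mk heq.symm
          _ = QuotientAddGroup.mk a' + QuotientAddGroup.mk b' := rfl
          _ = QuotientAddGroup.mk a₀ + QuotientAddGroup.mk b₀ := by rw [ea', eb']
      obtain ⟨p, hp, hup⟩ := huniq
      have e1 := hup (QuotientAddGroup.mk a, QuotientAddGroup.mk b)
        ⟨⟨a, ha, rfl⟩, ⟨b, hb, rfl⟩, hsum⟩
      have e2 := hup (QuotientAddGroup.mk a₀, QuotientAddGroup.mk b₀)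
        ⟨⟨a₀, hAe ha₀, rfl⟩, ⟨b₀, hBe hb₀, rfl⟩, rfl⟩
      have e3 := e1.trans e2.symm
      have ea : (QuotientAddGroup.mk a : G ⧸ H) = QuotientAddGroup.mk a₀ :=
        congrArg Prod.fst e3
      have eb : (QuotientAddGroup.mk b : G ⧸ H) = QuotientAddGroup.mk b₀ :=
        congrArg Prod.snd e3
      exact hny ⟨a, keyA a ha ea, b, keyB b hb eb, rfl⟩
  · intro x hx
    exact ⟨x, hx, 0, H.zero_mem, by simp⟩
end
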